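/- arXiv:1202.0313 — 3 statements merged into one kernel-verified Lean document; each statement's English description precedes it below -/
import Mathlib

section
/- Let n ≥ 4 be an integer, let s and t be distinct vertices of the complete graph K_n, and let Γ_n = K_n with the edge {s,t} deleted. For every rational q that is not equal to any of 0, 1, ..., n-1, one has Z_{s|t}(Γ_n;q,-1) ≠ 0 and q · Z_{st}(Γ_n;q,-1) / Z_{s|t}(Γ_n;q,-1) = (n-2)/(q-n+1); moreover, if in addition 1 < q < n-1, then this ratio is strictly less than -1. -/
/-! At `γ = -1` and `q = k ∈ ℕ`, inclusion–exclusion over the edges that a colouring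
`f : V → Fin k` leaves monochromatic turns `Z(G;k,-1)` into the number of proper
`k`-colourings of `G`, and `k Z_{st} + Z_{s|t}` into `k` times the number of proper colourings
with `f s = f t`: an edge set `A` is monochromatic for exactly `k^{κ(A)}` colourings, and for
`k^{κ(A)-1}` of those with `f s = f t` unless `A` already joins `s` and `t`.
A proper colouring of `Γ_n` is injective, or injective once `s` and `t` are identified, so
`Z_{st} + Z_{s|t} = (q)_n + (q)_{n-1}` and `q Z_{st} + Z_{s|t} = q (q)_{n-1}` at every natural
`q`, hence at every rational `q` since both sides are polynomials in `q`. Solving gives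
`(q-1) Z_{s|t} = q (q-n+1) (q)_{n-1}` and `(q-1) q Z_{st} = q (n-2) (q)_{n-1}`. -/

open scoped Classical

/-- The number of connected components of the spanning subgraph `(V, A)`
(isolated vertices count as components). -/
noncomputable def kappa {V : Type} [Fintype V] (A : Finset (Sym2 V)) : ℕ :=
  Nat.card (SimpleGraph.fromEdgeSet (↑A : Set (Sym2 V))).ConnectedComponent

/-- The random-cluster formulation of the Tutte polynomial:
`Z(G;q,γ) = Σ_{A ⊆ E} q^{κ(V,A)} γ^{|A|}`. -/
noncomputable def Z {V : Type} [Fintype V] (G : SimpleGraph V) (q γ : ℚ) : ℚ :=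
  ∑ A ∈ G.edgeFinset.powerset, q ^ kappa A * γ ^ A.card

/-- `Z_{st}`: the contribution to `Z(G;q,γ)` from edge sets `A` in which
`s` and `t` lie in the same component of `(V,A)`. -/
noncomputable def Zst {V : Type} [Fintype V] (G : SimpleGraph V) (s t : V) (q γ : ℚ) : ℚ :=
  ∑ A ∈ G.edgeFinset.powerset,
    if (SimpleGraph.fromEdgeSet (↑A : Set (Sym2 V))).Reachable s t then
      q ^ kappa A * γ ^ A.card else 0

/-- `Z_{s|t}`: the contribution to `Z(G;q,γ)` from edge sets `A` in which
`s` and `t` lie in different components of `(V,A)`. -/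
noncomputable def Zsep {V : Type} [Fintype V] (G : SimpleGraph V) (s t : V) (q γ : ℚ) : ℚ :=
  ∑ A ∈ G.edgeFinset.powerset,
    if ¬ (SimpleGraph.fromEdgeSet (↑A : Set (Sym2 V))).Reachable s t then
      q ^ kappa A * γ ^ A.card else 0

open Finset SimpleGraph Polynomial

section Colorings

variable {V β : Type*}

theorem forall_reachable_imp_eq_iff (G : SimpleGraph V) (f : V → β) :
    (∀ u v, G.Reachable u v → f u = f v) ↔ ∀ u v, G.Adj u v → f u = f v := by
  refine ⟨fun h u v huv => h u v huv.reachable, fun h u v huv => ?_⟩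
  obtain ⟨p⟩ := huv
  induction p with
  | nil => rfl
  | cons huw _ ih => exact (h _ _ huw).trans ih

theorem forall_reachable_fromEdgeSet_imp_eq_iff (A : Set (Sym2 V)) (f : V → β) :
    (∀ u v, (fromEdgeSet A).Reachable u v → f u = f v) ↔ ∀ e ∈ A, (e.map f).IsDiag := by
  rw [forall_reachable_imp_eq_iff, Sym2.forall]
  refine forall₂_congr fun u v => ?_
  by_cases huv : u = v <;> simp [huv]

def componentFunEquiv (G : SimpleGraph V) :
    (G.ConnectedComponent → β) ≃ {f : V → β // ∀ u v, G.Reachable u v → f u = f v} where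
  toFun g :=
    ⟨fun v => g (G.connectedComponentMk v), fun _ _ => congrArg g ∘ ConnectedComponent.sound⟩
  invFun f := ConnectedComponent.lift f.1 fun u v p _ => f.2 u v p.reachable
  left_inv _ := funext <| ConnectedComponent.ind fun _ => rfl
  right_inv _ := rfl

noncomputable def restrictNeEquiv {C : Type*} {a b : C} (hab : a ≠ b) :
    {g : C → β // g a = g b} ≃ ({c // c ≠ b} → β) where
  toFun g c := g.1 c
  invFun h := ⟨fun c => if hc : c = b then h ⟨a, hab⟩ else h ⟨c, hc⟩, by simp [hab]⟩
  left_inv g := by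
    ext c
    by_cases hc : c = b
    · subst hc; simpa [hab] using g.2
    · simp [hc]
  right_inv h := by ext c; simp [c.2]

theorem natCard_mul_natCard_apply_eq {C : Type*} [Finite C] (a b : C) :
    Nat.card β * Nat.card {g : C → β // g a = g b} =
      Nat.card β ^ Nat.card C * if a = b then Nat.card β else 1 := by
  by_cases hab : a = b
  · subst hab
    simp [Nat.card_fun, mul_comm]
  · classical
    rw [if_neg hab, mul_one, Nat.card_congr (restrictNeEquiv hab), ← Nat.card_prod,
      Nat.card_congr (Equiv.piSplitAt b fun _ => β).symm, Nat.card_fun]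

variable [Finite V]

theorem natCard_reachable_invariant_eq_pow (G : SimpleGraph V) :
    Nat.card {f : V → β // ∀ u v, G.Reachable u v → f u = f v} =
      Nat.card β ^ Nat.card G.ConnectedComponent := by
  rw [← Nat.card_congr (componentFunEquiv G), Nat.card_fun]

theorem natCard_mul_natCard_reachable_invariant_apply_eq (G : SimpleGraph V) (s t : V) :
    Nat.card β *
        Nat.card {f : V → β // (∀ u v, G.Reachable u v → f u = f v) ∧ f s = f t} =
      Nat.card β ^ Nat.card G.ConnectedComponent * if G.Reachable s t then Nat.card β else 1 := by
  have e := (Equiv.subtypeSubtypeEquivSubtypeInter _ (fun f : V → β => f s = f t)).symm.trans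
    (Equiv.subtypeEquiv (componentFunEquiv G).symm
      (q := fun g => g (G.connectedComponentMk s) = g (G.connectedComponentMk t)) fun _ => Iff.rfl)
  rw [Nat.card_congr e, natCard_mul_natCard_apply_eq, ConnectedComponent.eq]

end Colorings

section RandomCluster

variable {V : Type} [Fintype V] {β : Type*}

theorem natCard_monochromatic_eq_pow_kappa (A : Finset (Sym2 V)) :
    Nat.card {f : V → β // ∀ e ∈ A, (e.map f).IsDiag} = Nat.card β ^ kappa A := by
  rw [kappa, ← natCard_reachable_invariant_eq_pow]
  exact Nat.card_congr (Equiv.subtypeEquivRight fun f =>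
    (forall_reachable_fromEdgeSet_imp_eq_iff _ f).symm)

theorem natCard_mul_natCard_monochromatic_apply_eq (A : Finset (Sym2 V)) (s t : V) :
    Nat.card β * Nat.card {f : V → β // f s = f t ∧ ∀ e ∈ A, (e.map f).IsDiag} =
      Nat.card β ^ kappa A *
        if (fromEdgeSet (↑A : Set (Sym2 V))).Reachable s t then Nat.card β else 1 := by
  have hiff (f : V → β) :
      ((∀ u v, (fromEdgeSet (↑A : Set (Sym2 V))).Reachable u v → f u = f v) ∧ f s = f t) ↔
        f s = f t ∧ ∀ e ∈ A, (e.map f).IsDiag := by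
    rw [forall_reachable_fromEdgeSet_imp_eq_iff, and_comm]
    rfl
  rw [kappa, ← Nat.card_congr (Equiv.subtypeEquivRight hiff)]
  -- the two `if`s use different `Decidable` instances
  convert natCard_mul_natCard_reachable_invariant_apply_eq _ s t

theorem sum_powerset_neg_one_pow_mul_natCard_monochromatic [Finite β] {R : Type*} [CommRing R]
    (G : SimpleGraph V) (p : (V → β) → Prop) :
    ∑ A ∈ G.edgeFinset.powerset,
        (-1 : R) ^ #A * Nat.card {f : V → β // p f ∧ ∀ e ∈ A, (e.map f).IsDiag} =
      Nat.card {f : V → β // p f ∧ ∀ u v, G.Adj u v → f u ≠ f v} := by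
  have := Fintype.ofFinite β
  set S : Finset (V → β) := {f | p f}
  set mono : Sym2 V → Finset (V → β) := fun e => {f | (e.map f).IsDiag}
  have hinf (A : Finset (Sym2 V)) :
      #(A.inf mono ∩ S) = Nat.card {f : V → β // p f ∧ ∀ e ∈ A, (e.map f).IsDiag} := by
    rw [Nat.card_eq_fintype_card, Fintype.card_subtype]
    congr 1; ext f; simp [S, mono, mem_inf, and_comm]
  have hcompl : #((G.edgeFinset.inf fun e => (mono e)ᶜ) ∩ S) =
      Nat.card {f : V → β // p f ∧ ∀ u v, G.Adj u v → f u ≠ f v} := by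
    rw [Nat.card_eq_fintype_card, Fintype.card_subtype]
    congr 1; ext f; simp [S, mono, mem_inf, Sym2.forall, and_comm]
  have := inclusion_exclusion_sum_inf_compl G.edgeFinset mono
    (fun f => if f ∈ S then (1 : ℤ) else 0)
  simp only [sum_ite_mem, sum_const, smul_eq_mul, nsmul_eq_mul, mul_one, hinf, hcompl] at this
  simpa using congrArg (Int.cast : ℤ → R) this.symm

theorem Zst_add_Zsep (G : SimpleGraph V) (s t : V) (q γ : ℚ) :
    Zst G s t q γ + Zsep G s t q γ = Z G q γ := by
  rw [Zst, Zsep, Z, ← sum_add_distrib]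
  exact sum_congr rfl fun A _ => by split_ifs <;> simp_all

theorem Z_natCast_neg_one (G : SimpleGraph V) (k : ℕ) :
    Z G k (-1) = Nat.card {f : V → Fin k // ∀ u v, G.Adj u v → f u ≠ f v} := by
  have := sum_powerset_neg_one_pow_mul_natCard_monochromatic (β := Fin k) (R := ℚ) G
    fun _ => True
  simp only [true_and, natCard_monochromatic_eq_pow_kappa, Nat.card_eq_fintype_card (α := Fin k),
    Fintype.card_fin] at this
  rw [Z, ← this]
  push_cast
  exact sum_congr rfl fun A _ => mul_comm _ _

theorem mul_Zst_add_Zsep_natCast_neg_one (G : SimpleGraph V) (s t : V) (k : ℕ) :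
    k * Zst G s t k (-1) + Zsep G s t k (-1) =
      k * Nat.card {f : V → Fin k // f s = f t ∧ ∀ u v, G.Adj u v → f u ≠ f v} := by
  rw [← sum_powerset_neg_one_pow_mul_natCard_monochromatic, Zst, Zsep, mul_sum,
    ← sum_add_distrib, mul_sum]
  refine sum_congr rfl fun A _ => ?_
  have hcount :
      (k : ℚ) * Nat.card {f : V → Fin k // f s = f t ∧ ∀ e ∈ A, (e.map f).IsDiag} =
      (k : ℚ) ^ kappa A * if (fromEdgeSet (↑A : Set (Sym2 V))).Reachable s t then k else 1 := by
    have := natCard_mul_natCard_monochromatic_apply_eq (β := Fin k) A s t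
    simp only [Nat.card_eq_fintype_card (α := Fin k), Fintype.card_fin] at this
    exact_mod_cast this
  rw [mul_left_comm, hcount]
  split_ifs <;> ring

end RandomCluster

section CompleteMinusEdge

variable {V α : Type*} {s t : V}

theorem top_deleteEdges_adj {u v : V} :
    ((⊤ : SimpleGraph V).deleteEdges {s(s, t)}).Adj u v ↔ u ≠ v ∧ s(u, v) ≠ s(s, t) := by
  simp

theorem proper_top_deleteEdges_and_ne_iff_injective (hst : s ≠ t) (f : V → α) :
    ((∀ u v, ((⊤ : SimpleGraph V).deleteEdges {s(s, t)}).Adj u v → f u ≠ f v) ∧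
        f s ≠ f t) ↔
      Function.Injective f := by
  refine ⟨fun ⟨hf, hst'⟩ u v huv => ?_,
    fun hf => ⟨fun u v huv => ?_, fun h => hst (hf h)⟩⟩
  · by_contra hne
    by_cases he : s(u, v) = s(s, t)
    · rcases Sym2.eq_iff.1 he with ⟨rfl, rfl⟩ | ⟨rfl, rfl⟩
      exacts [hst' huv, hst' huv.symm]
    · exact hf u v (top_deleteEdges_adj.2 ⟨hne, he⟩) huv
  · exact (top_deleteEdges_adj.1 huv).1 ∘ (@hf u v)

theorem proper_top_deleteEdges_iff_injective_restrict (hst : s ≠ t) (f : V → α)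
    (hf : f s = f t) :
    (∀ u v, ((⊤ : SimpleGraph V).deleteEdges {s(s, t)}).Adj u v → f u ≠ f v) ↔
      Function.Injective fun x : {x // x ≠ t} => f x := by
  refine ⟨fun h x y hxy => ?_, fun h u v huv heq => ?_⟩
  · by_contra hne
    refine h x y (top_deleteEdges_adj.2 ⟨fun e => hne (Subtype.ext e), fun e => ?_⟩) hxy
    rcases Sym2.eq_iff.1 e with ⟨-, h⟩ | ⟨h, -⟩
    exacts [y.2 h, x.2 h]
  · obtain ⟨hne, he⟩ := top_deleteEdges_adj.1 huv
    have hinj {x y : V} (hx : x ≠ t) (hy : y ≠ t) (hxy : f x = f y) : x = y :=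
      congrArg Subtype.val (@h ⟨x, hx⟩ ⟨y, hy⟩ hxy)
    by_cases hu : u = t
    · subst hu
      have hv : v ≠ u := Ne.symm hne
      exact he (by rw [hinj hv hst (heq.symm.trans hf.symm), Sym2.eq_swap])
    by_cases hv : v = t
    · subst hv
      exact he (by rw [hinj hu hst (heq.trans hf.symm)])
    exact hne (hinj hu hv heq)

variable [Fintype V] [Fintype α]

theorem natCard_proper_top_deleteEdges_apply_eq (hst : s ≠ t) :
    Nat.card {f : V → α //
        f s = f t ∧
          ∀ u v, ((⊤ : SimpleGraph V).deleteEdges {s(s, t)}).Adj u v → f u ≠ f v} =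
      (Fintype.card α).descFactorial (Fintype.card V - 1) := by
  classical
  rw [← Nat.card_congr (Equiv.subtypeSubtypeEquivSubtypeInter _ _),
    Nat.card_congr (Equiv.subtypeEquiv (restrictNeEquiv hst) fun f =>
      proper_top_deleteEdges_iff_injective_restrict hst f.1 f.2),
    Nat.card_congr (Equiv.subtypeInjectiveEquivEmbedding _ _), Nat.card_eq_fintype_card,
    Fintype.card_embedding_eq, Fintype.card_subtype_compl, Fintype.card_subtype_eq]

theorem natCard_proper_top_deleteEdges (hst : s ≠ t) :
    Nat.card {f : V → α //
        ∀ u v, ((⊤ : SimpleGraph V).deleteEdges {s(s, t)}).Adj u v → f u ≠ f v} =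
      (Fintype.card α).descFactorial (Fintype.card V) +
        (Fintype.card α).descFactorial (Fintype.card V - 1) := by
  classical
  rw [← natCard_proper_top_deleteEdges_apply_eq hst, ← Fintype.card_embedding_eq,
    ← Nat.card_eq_fintype_card, ← Nat.card_congr (Equiv.subtypeInjectiveEquivEmbedding _ _),
    ← Nat.card_congr (Equiv.subtypeEquivRight (proper_top_deleteEdges_and_ne_iff_injective hst))]
  simp only [Nat.card_eq_fintype_card, Fintype.card_subtype]
  rw [← card_filter_add_card_filter_not (s := {f : V → α | _}) (fun f => f s = f t),
    filter_filter, filter_filter, add_comm]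
  congr 2
  ext f
  simp only [mem_filter, mem_univ, true_and, and_comm]

end CompleteMinusEdge

theorem Polynomial.eq_of_forall_eval_natCast_eq {R : Type*} [CommRing R] [IsDomain R] [CharZero R]
    {p r : R[X]} (h : ∀ k : ℕ, p.eval (k : R) = r.eval (k : R)) : p = r :=
  eq_of_infinite_eval_eq p r <| (Set.infinite_range_of_injective Nat.cast_injective).mono <| by
    rintro _ ⟨k, rfl⟩
    exact h k

theorem descPochhammer_eval_ne_zero {R : Type*} [CommRing R] [IsDomain R] {m : ℕ} {r : R}
    (h : ∀ i < m, r ≠ i) : (descPochhammer R m).eval r ≠ 0 := by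
  rw [descPochhammer_eval_eq_prod_range]
  exact prod_ne_zero_iff.2 fun i hi => sub_ne_zero.2 (h i (mem_range.1 hi))

section Polynomials

variable {V : Type} [Fintype V]

noncomputable def ZstPoly (G : SimpleGraph V) (s t : V) (γ : ℚ) : ℚ[X] :=
  ∑ A ∈ G.edgeFinset.powerset,
    if (fromEdgeSet (↑A : Set (Sym2 V))).Reachable s t then C (γ ^ #A) * X ^ kappa A else 0

noncomputable def ZsepPoly (G : SimpleGraph V) (s t : V) (γ : ℚ) : ℚ[X] :=
  ∑ A ∈ G.edgeFinset.powerset,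
    if ¬ (fromEdgeSet (↑A : Set (Sym2 V))).Reachable s t then C (γ ^ #A) * X ^ kappa A else 0

theorem eval_ZstPoly (G : SimpleGraph V) (s t : V) (q γ : ℚ) :
    (ZstPoly G s t γ).eval q = Zst G s t q γ := by
  simp [ZstPoly, Zst, eval_finsetSum, apply_ite, mul_comm]

theorem eval_ZsepPoly (G : SimpleGraph V) (s t : V) (q γ : ℚ) :
    (ZsepPoly G s t γ).eval q = Zsep G s t q γ := by
  simp [ZsepPoly, Zsep, eval_finsetSum, apply_ite, mul_comm]

variable {s t : V}

theorem Zst_add_Zsep_top_deleteEdges (hst : s ≠ t) (q : ℚ) :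
    Zst ((⊤ : SimpleGraph V).deleteEdges {s(s, t)}) s t q (-1) +
        Zsep ((⊤ : SimpleGraph V).deleteEdges {s(s, t)}) s t q (-1) =
      (q - Fintype.card V + 2) * (descPochhammer ℚ (Fintype.card V - 1)).eval q := by
  have key : ZstPoly ((⊤ : SimpleGraph V).deleteEdges {s(s, t)}) s t (-1) +
      ZsepPoly ((⊤ : SimpleGraph V).deleteEdges {s(s, t)}) s t (-1) =
        descPochhammer ℚ (Fintype.card V) + descPochhammer ℚ (Fintype.card V - 1) :=
    eq_of_forall_eval_natCast_eq fun k => by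
      rw [eval_add, eval_add, eval_ZstPoly, eval_ZsepPoly, Zst_add_Zsep, Z_natCast_neg_one,
        natCard_proper_top_deleteEdges hst]
      simp [descPochhammer_eval_eq_descFactorial]
  obtain ⟨m, hm⟩ : ∃ m, Fintype.card V = m + 1 :=
    Nat.exists_eq_add_one.2 (Fintype.card_pos_iff.2 ⟨s⟩)
  have := congrArg (eval q) key
  simp only [eval_add, eval_ZstPoly, eval_ZsepPoly, hm, Nat.add_sub_cancel,
    descPochhammer_succ_eval] at this
  rw [this, hm]
  push_cast
  ring

theorem mul_Zst_add_Zsep_top_deleteEdges (hst : s ≠ t) (q : ℚ) :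
    q * Zst ((⊤ : SimpleGraph V).deleteEdges {s(s, t)}) s t q (-1) +
        Zsep ((⊤ : SimpleGraph V).deleteEdges {s(s, t)}) s t q (-1) =
      q * (descPochhammer ℚ (Fintype.card V - 1)).eval q := by
  have key : X * ZstPoly ((⊤ : SimpleGraph V).deleteEdges {s(s, t)}) s t (-1) +
      ZsepPoly ((⊤ : SimpleGraph V).deleteEdges {s(s, t)}) s t (-1) =
        X * descPochhammer ℚ (Fintype.card V - 1) :=
    eq_of_forall_eval_natCast_eq fun k => by
      rw [eval_add, eval_mul, eval_mul, eval_X, eval_ZstPoly, eval_ZsepPoly,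
        mul_Zst_add_Zsep_natCast_neg_one, natCard_proper_top_deleteEdges_apply_eq hst]
      simp [descPochhammer_eval_eq_descFactorial]
  simpa [eval_ZstPoly, eval_ZsepPoly] using congrArg (eval q) key

end Polynomials

theorem complete_minus_edge_ratio_general (n : ℕ) (s t : Fin n) (hst : s ≠ t)
    (q : ℚ) (hq : ∀ i : ℕ, i < n → q ≠ (i : ℚ)) :
    Zsep ((⊤ : SimpleGraph (Fin n)).deleteEdges {s(s, t)}) s t q (-1) ≠ 0 ∧
    q * Zst ((⊤ : SimpleGraph (Fin n)).deleteEdges {s(s, t)}) s t q (-1) /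
      Zsep ((⊤ : SimpleGraph (Fin n)).deleteEdges {s(s, t)}) s t q (-1) =
      ((n : ℚ) - 2) / (q - n + 1) ∧
    (1 < q → q < (n : ℚ) - 1 →
      q * Zst ((⊤ : SimpleGraph (Fin n)).deleteEdges {s(s, t)}) s t q (-1) /
        Zsep ((⊤ : SimpleGraph (Fin n)).deleteEdges {s(s, t)}) s t q (-1) < -1) := by
  have hn : 2 ≤ n := by have := s.isLt; have := t.isLt; have := Fin.val_ne_of_ne hst; omega
  set a := Zst ((⊤ : SimpleGraph (Fin n)).deleteEdges {s(s, t)}) s t q (-1)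
  set b := Zsep ((⊤ : SimpleGraph (Fin n)).deleteEdges {s(s, t)}) s t q (-1)
  set E := (descPochhammer ℚ (n - 1)).eval q
  have hsum : a + b = (q - n + 2) * E := by simpa using Zst_add_Zsep_top_deleteEdges hst q
  have hmul : q * a + b = q * E := by simpa using mul_Zst_add_Zsep_top_deleteEdges hst q
  have hE : E ≠ 0 := descPochhammer_eval_ne_zero fun i hi => hq i (by omega)
  have hq0 : q ≠ 0 := by exact_mod_cast hq 0 (by omega)
  have hq1 : q - 1 ≠ 0 := sub_ne_zero.2 (by exact_mod_cast hq 1 (by omega))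
  have hqn : q - n + 1 ≠ 0 := by
    have := hq (n - 1) (by omega)
    rw [Nat.cast_sub (by omega : 1 ≤ n), Nat.cast_one] at this
    contrapose! this; linarith
  have hb : (q - 1) * b = q * (q - n + 1) * E := by linear_combination q * hsum - hmul
  have ha : (q - 1) * (q * a) = q * (n - 2) * E := by linear_combination q * hmul - q * hsum
  have hb0 : b ≠ 0 := fun h0 =>
    mul_ne_zero (mul_ne_zero hq0 hqn) hE (by rw [← hb, h0, mul_zero])
  have hratio : q * a / b = ((n : ℚ) - 2) / (q - n + 1) := by
    rw [div_eq_div_iff hb0 hqn]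
    refine mul_left_cancel₀ hq1 ?_
    linear_combination (q - n + 1) * ha - (n - 2) * hb
  refine ⟨hb0, hratio, fun h1 hn1 => ?_⟩
  rw [hratio, div_lt_iff_of_neg (by linarith)]
  linarith

/-- for `n ≥ 4`, distinct vertices `s,t` of `K_n`, and `Γ_n = K_n - {s,t}`,
if the rational `q` avoids `0, 1, …, n-1` then `Z_{s|t}(Γ_n;q,-1) ≠ 0`,
`q·Z_{st}(Γ_n;q,-1)/Z_{s|t}(Γ_n;q,-1) = (n-2)/(q-n+1)`, and if moreover `1 < q < n-1`
then this ratio is strictly less than `-1`. -/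
theorem complete_minus_edge_ratio (n : ℕ) (hn : 4 ≤ n) (s t : Fin n) (hst : s ≠ t)
    (q : ℚ) (hq : ∀ i : ℕ, i < n → q ≠ (i : ℚ)) :
    Zsep ((⊤ : SimpleGraph (Fin n)).deleteEdges {s(s, t)}) s t q (-1) ≠ 0 ∧
    q * Zst ((⊤ : SimpleGraph (Fin n)).deleteEdges {s(s, t)}) s t q (-1) /
      Zsep ((⊤ : SimpleGraph (Fin n)).deleteEdges {s(s, t)}) s t q (-1) =
      ((n : ℚ) - 2) / (q - n + 1) ∧
    (1 < q → q < (n : ℚ) - 1 →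
      q * Zst ((⊤ : SimpleGraph (Fin n)).deleteEdges {s(s, t)}) s t q (-1) /
        Zsep ((⊤ : SimpleGraph (Fin n)).deleteEdges {s(s, t)}) s t q (-1) < -1) :=
  complete_minus_edge_ratio_general n s t hst q hq
end

section
/- Define the real polynomials f(q) = q^6 - 15q^5 + 95q^4 - 325q^3 + 624q^2 - 620q + 240 and g(q) = q^5 - 12q^4 + 58q^3 - 138q^2 + 157q - 66. Then for every real q with 2 < q < 3, f(q) > 0 and g(q) < 0; and for every real q with 3 < q < 4, f(q) < 0 and g(q) > 0. -/
/-- with `f(q) = q^6 - 15q^5 + 95q^4 - 325q^3 + 624q^2 - 620q + 240` and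
`g(q) = q^5 - 12q^4 + 58q^3 - 138q^2 + 157q - 66`: for `2 < q < 3` we have `f(q) > 0`
and `g(q) < 0`, and for `3 < q < 4` we have `f(q) < 0` and `g(q) > 0`. -/
theorem flow_polynomial_signs :
    (∀ q : ℝ, 2 < q → q < 3 →
      0 < q ^ 6 - 15 * q ^ 5 + 95 * q ^ 4 - 325 * q ^ 3 + 624 * q ^ 2 - 620 * q + 240 ∧
      q ^ 5 - 12 * q ^ 4 + 58 * q ^ 3 - 138 * q ^ 2 + 157 * q - 66 < 0) ∧
    (∀ q : ℝ, 3 < q → q < 4 →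
      q ^ 6 - 15 * q ^ 5 + 95 * q ^ 4 - 325 * q ^ 3 + 624 * q ^ 2 - 620 * q + 240 < 0 ∧
      0 < q ^ 5 - 12 * q ^ 4 + 58 * q ^ 3 - 138 * q ^ 2 + 157 * q - 66) := by
  constructor
  · intro q h2 h3
    have h1 : (0:ℝ) < q - 1 := by linarith
    have ha : (0:ℝ) < q - 2 := by linarith
    have hb : (0:ℝ) < 3 - q := by linarith
    have hc : (0:ℝ) < 4 - q := by linarith
    have hq1 : (0:ℝ) < q ^ 2 - 5 * q + 10 := by nlinarith [sq_nonneg (q - 5/2)]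
    have hq2 : (0:ℝ) < q ^ 2 - 6 * q + 11 := by nlinarith [sq_nonneg (q - 3)]
    constructor
    · nlinarith [mul_pos (mul_pos (mul_pos (mul_pos h1 ha) hb) hc) hq1]
    · nlinarith [mul_pos (mul_pos (mul_pos h1 ha) hb) hq2]
  · intro q h3 h4
    have h1 : (0:ℝ) < q - 1 := by linarith
    have ha : (0:ℝ) < q - 2 := by linarith
    have hb : (0:ℝ) < q - 3 := by linarith
    have hc : (0:ℝ) < 4 - q := by linarith
    have hq1 : (0:ℝ) < q ^ 2 - 5 * q + 10 := by nlinarith [sq_nonneg (q - 5/2)]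
    have hq2 : (0:ℝ) < q ^ 2 - 6 * q + 11 := by nlinarith [sq_nonneg (q - 3)]
    constructor
    · nlinarith [mul_pos (mul_pos (mul_pos (mul_pos h1 ha) hb) hc) hq1]
    · nlinarith [mul_pos (mul_pos (mul_pos h1 ha) hb) hq2]
end

section
/- Let q be a negative rational number, let M be a matroid on a finite ground set E with no loops, and let 𝛄 be a weight function such that -2 ≤ γ_e ≤ 0 for every e ∈ E. Then the multivariate matroid Tutte polynomial satisfies Z̃(M;q,𝛄) > 0. -/
/-- A matroid on a finite ground set `E`, presented by its rank function. -/
structure RankMatroid (α : Type) [DecidableEq α] where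
  /-- the ground set -/
  E : Finset α
  /-- the rank function -/
  r : Finset α → ℕ
  rank_le_card : ∀ A, A ⊆ E → r A ≤ A.card
  rank_mono : ∀ A B, A ⊆ B → B ⊆ E → r A ≤ r B
  rank_submodular : ∀ A B, A ⊆ E → B ⊆ E → r (A ∪ B) + r (A ∩ B) ≤ r A + r B

/-- The multivariate matroid Tutte polynomial
`Z̃(M;q,𝛄) = Σ_{A⊆E} q^{-r(A)} ∏_{e∈A} γ_e`. -/
noncomputable def Zt {α : Type} [DecidableEq α] (M : RankMatroid α) (q : ℚ) (w : α → ℚ) : ℚ :=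
  ∑ A ∈ M.E.powerset, q ^ (-(M.r A : ℤ)) * ∏ e ∈ A, w e

/-- A loop of a matroid: an element of the ground set of rank `0`. -/
def RankMatroid.IsLoop {α : Type} [DecidableEq α] (M : RankMatroid α) (e : α) : Prop :=
  e ∈ M.E ∧ M.r {e} = 0

/-
Induction on the size of the ground set. If some `e` has a parallel element `f`, the terms of
`Z̃` indexed by `A`, `A + e`, `A + f`, `A + e + f` combine, so `f` can be deleted once `γ_e` is
replaced by `γ_e + γ_f + γ_e γ_f = (1 + γ_e)(1 + γ_f) - 1`, which stays in `[-2, 0]`.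
Otherwise `M / e` is loopless, and deletion–contraction
`Z̃(M) = Z̃(M \ e) + (γ_e / q) Z̃(M / e)` exhibits `Z̃(M)` as a positive number plus a nonnegative
multiple of a positive number, since `γ_e ≤ 0` and `q < 0`.
-/

namespace RankMatroid

variable {α : Type} [DecidableEq α]

def Loopless (M : RankMatroid α) : Prop :=
  ∀ e ∈ M.E, ¬ M.IsLoop e

lemma rank_empty (M : RankMatroid α) : M.r ∅ = 0 :=
  Nat.le_zero.mp (by simpa using M.rank_le_card ∅ (Finset.empty_subset _))

lemma Loopless.rank_singleton {M : RankMatroid α} (hM : M.Loopless) {e : α} (he : e ∈ M.E) :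
    M.r {e} = 1 := by
  have hle : M.r {e} ≤ 1 := by simpa using M.rank_le_card {e} (by simpa using he)
  have hne : M.r {e} ≠ 0 := fun h => hM e he ⟨he, h⟩
  omega

lemma rank_insert_of_rank_pair_eq (M : RankMatroid α) {X : Finset α} {e f : α}
    (hX : X ⊆ M.E) (heX : e ∈ X) (hf : f ∈ M.E) (hpar : M.r {e, f} = M.r {e}) :
    M.r (insert f X) = M.r X := by
  have hpair : ({e, f} : Finset α) ⊆ M.E := Finset.insert_subset (hX heX) (by simpa using hf)
  have hsub := M.rank_submodular X {e, f} hX hpair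
  have hunion : X ∪ {e, f} = insert f X := by
    rw [Finset.union_insert, Finset.insert_eq_of_mem (Finset.mem_union_left _ heX),
      Finset.union_singleton]
  have hinter : M.r {e} ≤ M.r (X ∩ {e, f}) :=
    M.rank_mono _ _ (by simp [heX]) (Finset.inter_subset_left.trans hX)
  have hmono : M.r X ≤ M.r (insert f X) :=
    M.rank_mono _ _ (Finset.subset_insert _ _) (Finset.insert_subset hf hX)
  rw [hunion] at hsub
  omega

@[simps E r]
def delete (M : RankMatroid α) (e : α) : RankMatroid α where
  E := M.E.erase e
  r := M.r
  rank_le_card A hA := M.rank_le_card A (hA.trans (Finset.erase_subset _ _))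
  rank_mono A B hAB hB := M.rank_mono A B hAB (hB.trans (Finset.erase_subset _ _))
  rank_submodular A B hA hB :=
    M.rank_submodular A B (hA.trans (Finset.erase_subset _ _)) (hB.trans (Finset.erase_subset _ _))

@[simps E r]
def contract (M : RankMatroid α) (e : α) (he : e ∈ M.E) : RankMatroid α where
  E := M.E.erase e
  r A := M.r (insert e A) - M.r {e}
  rank_le_card A hA := by
    have hAE : A ⊆ M.E := hA.trans (Finset.erase_subset _ _)
    have hsub := M.rank_submodular A {e} hAE (by simpa using he)
    have hdisj : A ∩ {e} = ∅ :=
      Finset.inter_singleton_of_notMem fun h => Finset.notMem_erase e M.E (hA h)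
    rw [Finset.union_singleton, hdisj, M.rank_empty] at hsub
    have := M.rank_le_card A hAE
    omega
  rank_mono A B hAB hB := by
    have : M.r (insert e A) ≤ M.r (insert e B) :=
      M.rank_mono _ _ (Finset.insert_subset_insert _ hAB)
        (Finset.insert_subset he (hB.trans (Finset.erase_subset _ _)))
    omega
  rank_submodular A B hA hB := by
    have hAE : insert e A ⊆ M.E := Finset.insert_subset he (hA.trans (Finset.erase_subset _ _))
    have hBE : insert e B ⊆ M.E := Finset.insert_subset he (hB.trans (Finset.erase_subset _ _))
    have hsub := M.rank_submodular _ _ hAE hBE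
    rw [← Finset.insert_union_distrib, ← Finset.insert_inter_distrib] at hsub
    have hmono {X : Finset α} (hX : insert e X ⊆ M.E) : M.r {e} ≤ M.r (insert e X) :=
      M.rank_mono _ _ (by simp) hX
    have := hmono hAE
    have := hmono hBE
    have := hmono (Finset.insert_subset_insert e (Finset.inter_subset_left (s₂ := B)) |>.trans hAE)
    have := hmono (Finset.insert_union_distrib e A B ▸ Finset.union_subset hAE hBE)
    omega

lemma Loopless.delete {M : RankMatroid α} (hM : M.Loopless) (f : α) : (M.delete f).Loopless :=
  fun x hx hloop => hM x (Finset.mem_of_mem_erase hx) ⟨Finset.mem_of_mem_erase hx, hloop.2⟩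

lemma loopless_contract {M : RankMatroid α} {e : α} (he : e ∈ M.E)
    (hpar : ∀ f ∈ M.E, f ≠ e → M.r {e, f} ≠ M.r {e}) : (M.contract e he).Loopless := by
  rintro x hx ⟨-, hloop⟩
  obtain ⟨hxe, hxE⟩ := Finset.mem_erase.mp hx
  have hmono : M.r {e} ≤ M.r {e, x} :=
    M.rank_mono _ _ (by simp) (Finset.insert_subset he (by simpa using hxE))
  simp only [contract_r] at hloop
  exact hpar x hxE hxe (by omega)

lemma Zt_eq_one_of_E_eq_empty (M : RankMatroid α) (hE : M.E = ∅) (q : ℚ) (w : α → ℚ) :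
    Zt M q w = 1 := by
  simp [Zt, hE, M.rank_empty]

lemma Zt_delete_add_contract (M : RankMatroid α) (q : ℚ) {e : α} (he : e ∈ M.E) (w : α → ℚ) :
    Zt M q w = Zt (M.delete e) q w + w e * q ^ (-(M.r {e} : ℤ)) * Zt (M.contract e he) q w := by
  unfold Zt
  rw [← Finset.insert_erase he, Finset.sum_powerset_insert (Finset.notMem_erase e M.E),
    delete_E, contract_E, Finset.mul_sum]
  congr 1
  refine Finset.sum_congr rfl fun A hA => ?_
  have hAE : A ⊆ M.E.erase e := Finset.mem_powerset.mp hA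
  have heA : e ∉ A := fun h => Finset.notMem_erase e M.E (hAE h)
  obtain ⟨k, hk⟩ := Nat.exists_eq_add_of_le <| M.rank_mono {e} (insert e A) (by simp)
    (Finset.insert_subset he (hAE.trans (Finset.erase_subset _ _)))
  rw [contract_r, Finset.prod_insert heA, hk, Nat.add_sub_cancel_left]
  simp only [zpow_neg, zpow_natCast, pow_add, mul_inv]
  ring

lemma Zt_delete_parallel (M : RankMatroid α) (q : ℚ) {e f : α} (he : e ∈ M.E) (hf : f ∈ M.E)
    (hef : e ≠ f) (hpar_e : M.r {e, f} = M.r {e}) (hpar_f : M.r {e, f} = M.r {f})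
    (w : α → ℚ) :
    Zt M q w = Zt (M.delete f) q (Function.update w e (w e + w f + w e * w f)) := by
  have he' : e ∈ M.E.erase f := Finset.mem_erase.mpr ⟨hef, he⟩
  have hfE : f ∉ M.E.erase f := Finset.notMem_erase f M.E
  have heE : e ∉ (M.E.erase f).erase e := Finset.notMem_erase e _
  unfold Zt
  rw [delete_E, ← Finset.insert_erase hf, Finset.sum_powerset_insert hfE, Finset.erase_insert hfE,
    ← Finset.insert_erase he', Finset.sum_powerset_insert heE, Finset.sum_powerset_insert heE,
    Finset.sum_powerset_insert heE, ← Finset.sum_add_distrib, ← Finset.sum_add_distrib,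
    ← Finset.sum_add_distrib, ← Finset.sum_add_distrib]
  refine Finset.sum_congr rfl fun A hA => ?_
  have hAE : A ⊆ (M.E.erase f).erase e := Finset.mem_powerset.mp hA
  have heA : e ∉ A := fun h => heE (hAE h)
  have hfA : f ∉ A := fun h => hfE (Finset.mem_of_mem_erase (hAE h))
  have hAM : A ⊆ M.E := hAE.trans ((Finset.erase_subset _ _).trans (Finset.erase_subset _ _))
  have hfeA : f ∉ insert e A := by simp [hef.symm, hfA]
  have hrank_ef : M.r (insert f (insert e A)) = M.r (insert e A) :=
    M.rank_insert_of_rank_pair_eq (Finset.insert_subset he hAM) (Finset.mem_insert_self _ _) hf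
      hpar_e
  have hrank_fe : M.r (insert e (insert f A)) = M.r (insert f A) :=
    M.rank_insert_of_rank_pair_eq (Finset.insert_subset hf hAM) (Finset.mem_insert_self _ _) he
      (by rw [Finset.pair_comm, hpar_f])
  have hrank_f : M.r (insert f A) = M.r (insert e A) := by
    rw [← hrank_fe, Finset.insert_comm, hrank_ef]
  have hprod : ∏ x ∈ A, Function.update w e (w e + w f + w e * w f) x = ∏ x ∈ A, w x :=
    Finset.prod_congr rfl fun x hx => Function.update_of_ne (ne_of_mem_of_not_mem hx heA) _ _
  rw [Finset.prod_insert heA, Finset.prod_insert hfA, Finset.prod_insert heA,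
    Finset.prod_insert hfeA, Finset.prod_insert heA, hprod, Function.update_self, hrank_ef,
    hrank_f, delete_r, delete_r]
  ring

end RankMatroid

/-- `a + b + a b = (1 + a)(1 + b) - 1`, and `1 + a, 1 + b ∈ [-1, 1]`. -/
lemma add_add_mul_mem_Icc {a b : ℚ} (ha : a ∈ Set.Icc (-2) 0) (hb : b ∈ Set.Icc (-2) 0) :
    a + b + a * b ∈ Set.Icc (-2) 0 := by
  obtain ⟨ha₁, ha₂⟩ := ha
  obtain ⟨hb₁, hb₂⟩ := hb
  constructor <;> nlinarith

open RankMatroid in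
/-- if `q < 0`, `M` is a loopless matroid on a finite ground set, and
`-2 ≤ γ_e ≤ 0` for every `e ∈ E`, then `Z̃(M;q,𝛄) > 0`. -/
theorem matroid_tutte_pos_of_neg_q {α : Type} [DecidableEq α] (q : ℚ) (hq : q < 0)
    (M : RankMatroid α) (hloopless : ∀ e ∈ M.E, ¬ M.IsLoop e)
    (w : α → ℚ) (hw : ∀ e ∈ M.E, -2 ≤ w e ∧ w e ≤ 0) :
    0 < Zt M q w := by
  induction hn : M.E.card generalizing M w with
  | zero => simp [M.Zt_eq_one_of_E_eq_empty (Finset.card_eq_zero.mp hn)]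
  | succ n ih =>
    have hcard {x : α} (hx : x ∈ M.E) : (M.E.erase x).card = n := by
      rw [Finset.card_erase_of_mem hx, hn, Nat.add_sub_cancel]
    have hM : M.Loopless := hloopless
    obtain ⟨e, he⟩ : M.E.Nonempty := Finset.card_pos.mp (by omega)
    by_cases hpar : ∃ f ∈ M.E, f ≠ e ∧ M.r {e, f} = M.r {e}
    · obtain ⟨f, hf, hfe, hpar_e⟩ := hpar
      have hpar_f : M.r {e, f} = M.r {f} := by
        rw [hpar_e, hM.rank_singleton he, hM.rank_singleton hf]
      rw [M.Zt_delete_parallel q he hf hfe.symm hpar_e hpar_f w]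
      refine ih _ (hM.delete f) _ (fun x hx => ?_) (hcard hf)
      rcases eq_or_ne x e with rfl | hxe
      · simpa using add_add_mul_mem_Icc (hw x he) (hw f hf)
      · simpa [hxe] using hw x (Finset.mem_of_mem_erase hx)
    · push Not at hpar
      have hw' : ∀ x ∈ M.E.erase e, -2 ≤ w x ∧ w x ≤ 0 :=
        fun x hx => hw x (Finset.mem_of_mem_erase hx)
      have hdel := ih _ (hM.delete e) _ hw' (hcard he)
      have hcon := ih _ (loopless_contract he hpar) _ hw' (hcard he)
      have hcoeff : 0 ≤ w e * q ^ (-(M.r {e} : ℤ)) := by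
        rw [hM.rank_singleton he, Nat.cast_one, zpow_neg_one]
        exact mul_nonneg_of_nonpos_of_nonpos (hw e he).2 (inv_nonpos.mpr hq.le)
      rw [M.Zt_delete_add_contract q he w]
      positivity
end
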